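/- Let H(W) be a finite connected network whose vertex set is partitioned into disjoint sets A and B, and suppose there exist u ∈ A, v ∈ B, and ε > 0 with: (1) R_eff(u,v) ≥ ε, and (2) R_eff(u,x) ≤ ε/12 for all x ∈ A and R_eff(v,x) ≤ ε/12 for all x ∈ B. Then R_eff(A,B) ≥ ε/6. -/

import Mathlib

/-! Take a near-optimal potential `f` for `({u}, {v})`: `f u = 1`, `f v = 0` and
`E(f) ≈ C(u, v) ≤ 1/ε`. The pointwise bound `(f w - f x)² ≤ R(w, x) E(f)` keeps `f` close to `1`
on `A` and close to `0` on `B`, so rescaling and clamping `f` yields a potential admissible for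
`(A, B)` whose energy is less than `6/ε`. -/

/-- Dirichlet energy of a function on a network. -/
noncomputable def energy {V : Type*} [Fintype V] (c : V → V → ℝ) (f : V → ℝ) : ℝ :=
  (1 / 2) * ∑ x, ∑ y, c x y * (f x - f y) ^ 2

/-- A network is connected if only constant functions have zero energy. -/
def Connected {V : Type*} [Fintype V] (c : V → V → ℝ) : Prop :=
  ∀ f : V → ℝ, energy c f = 0 → ∀ x y, f x = f y

/-- Effective conductance between two disjoint vertex sets, via the Dirichlet principle. -/
noncomputable def effCond {V : Type*} [Fintype V] (c : V → V → ℝ) (A B : Set V) : ℝ :=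
  sInf {e | ∃ f : V → ℝ, (∀ a ∈ A, f a = 1) ∧ (∀ b ∈ B, f b = 0) ∧ e = energy c f}

/-- Effective resistance between two vertex sets. -/
noncomputable def effRes {V : Type*} [Fintype V] (c : V → V → ℝ) (A B : Set V) : ℝ :=
  1 / effCond c A B

section

variable {V : Type*} [Fintype V] {c : V → V → ℝ}

lemma energy_nonneg (hnn : ∀ a b, 0 ≤ c a b) (f : V → ℝ) : 0 ≤ energy c f :=
  mul_nonneg (by norm_num) <| Finset.sum_nonneg fun x _ => Finset.sum_nonneg fun y _ =>
    mul_nonneg (hnn x y) (sq_nonneg _)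

lemma energy_smul (k : ℝ) (f : V → ℝ) : energy c (k • f) = k ^ 2 * energy c f := by
  simp only [energy, Pi.smul_apply, smul_eq_mul, Finset.mul_sum]
  refine Finset.sum_congr rfl fun x _ => Finset.sum_congr rfl fun y _ => ?_
  ring

lemma energy_sub_const (f : V → ℝ) (a : ℝ) : energy c (f - fun _ => a) = energy c f := by
  simp only [energy, Pi.sub_apply, sub_sub_sub_cancel_right]

lemma energy_le_energy (hnn : ∀ a b, 0 ≤ c a b) {f g : V → ℝ}
    (h : ∀ x y, |f x - f y| ≤ |g x - g y|) : energy c f ≤ energy c g :=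
  mul_le_mul_of_nonneg_left (Finset.sum_le_sum fun x _ => Finset.sum_le_sum fun y _ =>
    mul_le_mul_of_nonneg_left (sq_le_sq.mpr (h x y)) (hnn x y)) (by norm_num)

lemma effCond_nonneg (hnn : ∀ a b, 0 ≤ c a b) (A B : Set V) : 0 ≤ effCond c A B :=
  Real.sInf_nonneg <| by rintro _ ⟨f, -, -, rfl⟩; exact energy_nonneg hnn f

lemma effRes_nonneg (hnn : ∀ a b, 0 ≤ c a b) (A B : Set V) : 0 ≤ effRes c A B :=
  one_div_nonneg.mpr (effCond_nonneg hnn A B)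

lemma effCond_le_energy (hnn : ∀ a b, 0 ≤ c a b) {A B : Set V} {f : V → ℝ}
    (hA : ∀ a ∈ A, f a = 1) (hB : ∀ b ∈ B, f b = 0) : effCond c A B ≤ energy c f :=
  csInf_le ⟨0, by rintro _ ⟨g, -, -, rfl⟩; exact energy_nonneg hnn g⟩ ⟨f, hA, hB, rfl⟩

lemma le_effCond {A B : Set V} (hAB : Disjoint A B) {t : ℝ}
    (h : ∀ f : V → ℝ, (∀ a ∈ A, f a = 1) → (∀ b ∈ B, f b = 0) → t ≤ energy c f) :
    t ≤ effCond c A B := by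
  classical
  refine le_csInf ⟨_, A.indicator 1, fun a ha => ?_, fun b hb => ?_, rfl⟩ ?_
  · simp [ha]
  · simp [Set.disjoint_right.mp hAB hb]
  · rintro _ ⟨f, hA, hB, rfl⟩
    exact h f hA hB

lemma effCond_mono (hnn : ∀ a b, 0 ≤ c a b) {A B A' B' : Set V} (hAB : Disjoint A B)
    (hA : A' ⊆ A) (hB : B' ⊆ B) : effCond c A' B' ≤ effCond c A B :=
  le_effCond hAB fun _ hfA hfB =>
    effCond_le_energy hnn (fun a ha => hfA a (hA ha)) (fun b hb => hfB b (hB hb))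

/-- Positivity rules out the junk value `sInf ∅ = 0`, so admissible functions exist. -/
lemma exists_energy_lt {A B : Set V} (hpos : 0 < effCond c A B) {t : ℝ}
    (ht : effCond c A B < t) :
    ∃ f : V → ℝ, (∀ a ∈ A, f a = 1) ∧ (∀ b ∈ B, f b = 0) ∧ energy c f < t := by
  have hne : {e | ∃ f : V → ℝ, (∀ a ∈ A, f a = 1) ∧ (∀ b ∈ B, f b = 0) ∧
      e = energy c f}.Nonempty :=
    Set.nonempty_iff_ne_empty.mpr fun h => hpos.ne' (by rw [effCond, h, Real.sInf_empty])
  obtain ⟨_, ⟨f, hA, hB, rfl⟩, hlt⟩ := exists_lt_of_csInf_lt hne ht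
  exact ⟨f, hA, hB, hlt⟩

/-- Rescaling `f` so that `b ↦ 0`, `a ↦ 1` and clamping to `[0, 1]` gives an admissible
function for `(A, B)`; clamping does not increase energy. -/
lemma effCond_mul_sq_le_energy (hnn : ∀ a b, 0 ≤ c a b) {A B : Set V} {f : V → ℝ}
    {a b : ℝ} (hab : b ≤ a) (hA : ∀ x ∈ A, a ≤ f x) (hB : ∀ x ∈ B, f x ≤ b) :
    effCond c A B * (a - b) ^ 2 ≤ energy c f := by
  rcases hab.eq_or_lt with rfl | hab
  · simpa using energy_nonneg hnn f
  set g : V → ℝ := (a - b)⁻¹ • (f - fun _ => b)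
  set h : V → ℝ := fun z => Set.projIcc 0 1 zero_le_one (g z)
  have hgA : ∀ x ∈ A, 1 ≤ g x := fun x hx => by
    simpa [g, one_le_inv_mul₀ (sub_pos.mpr hab)] using hA x hx
  have hgB : ∀ x ∈ B, g x ≤ 0 := fun x hx =>
    mul_nonpos_of_nonneg_of_nonpos (inv_nonneg.mpr (sub_pos.mpr hab).le)
      (sub_nonpos.mpr (hB x hx))
  have hCh : effCond c A B ≤ energy c h :=
    effCond_le_energy hnn (fun x hx => by simp [h, Set.projIcc_of_right_le _ (hgA x hx)])
      (fun x hx => by simp [h, Set.projIcc_of_le_left _ (hgB x hx)])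
  have hhg : energy c h ≤ energy c g :=
    energy_le_energy hnn fun x y => Set.abs_projIcc_sub_projIcc zero_le_one
  have hg : energy c g = ((a - b) ^ 2)⁻¹ * energy c f := by
    rw [energy_smul, energy_sub_const, inv_pow]
  calc effCond c A B * (a - b) ^ 2 ≤ energy c g * (a - b) ^ 2 := by
        gcongr; exact hCh.trans hhg
    _ = energy c f := by rw [hg]; field_simp

/-- The minimum of the energy over the compact set of unit-norm functions vanishing at `x`
is positive by connectedness. -/
lemma exists_pos_le_energy (hnn : ∀ a b, 0 ≤ c a b) (hconn : Connected c) {w x : V}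
    (hwx : w ≠ x) : ∃ α > 0, ∀ f : V → ℝ, f w = 1 → f x = 0 → α ≤ energy c f := by
  classical
  set S : Set (V → ℝ) := Metric.sphere 0 1 ∩ {f | f x = 0}
  have hS : IsCompact S :=
    (isCompact_sphere 0 1).inter_right (isClosed_eq (continuous_apply x) continuous_const)
  have hne : S.Nonempty := ⟨Pi.single w 1, by simp [Pi.norm_single], by simp [hwx.symm]⟩
  have hcont : Continuous (energy c) := by unfold energy; fun_prop
  obtain ⟨f₀, ⟨hf₀, hf₀x⟩, hmin⟩ := hS.exists_isMinOn hne hcont.continuousOn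
  refine ⟨energy c f₀, (energy_nonneg hnn f₀).lt_of_ne fun h => ?_, fun f hfw hfx => ?_⟩
  · have : f₀ = 0 := funext fun z => (hconn f₀ h.symm z x).trans hf₀x
    simp [this] at hf₀
  · have hf : 1 ≤ ‖f‖ := by simpa [hfw] using norm_le_pi_norm f w
    have hmem : ‖f‖⁻¹ • f ∈ S :=
      ⟨by simp [norm_smul, (zero_lt_one.trans_le hf).ne'], by simp [hfx]⟩
    calc energy c f₀ ≤ energy c (‖f‖⁻¹ • f) := hmin hmem
      _ = (‖f‖ ^ 2)⁻¹ * energy c f := by rw [energy_smul, inv_pow]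
      _ ≤ energy c f := by
        apply mul_le_of_le_one_left (energy_nonneg hnn f)
        exact inv_le_one_of_one_le₀ (one_le_pow₀ hf)

lemma effCond_singleton_pos (hnn : ∀ a b, 0 ≤ c a b) (hconn : Connected c) {w x : V}
    (hwx : w ≠ x) : 0 < effCond c {w} {x} := by
  obtain ⟨α, hα, hle⟩ := exists_pos_le_energy hnn hconn hwx
  exact hα.trans_le <| le_effCond (Set.disjoint_singleton.mpr hwx) fun f hw hx =>
    hle f (hw w rfl) (hx x rfl)

lemma sq_sub_le_effRes_mul_energy (hnn : ∀ a b, 0 ≤ c a b) (hconn : Connected c)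
    (f : V → ℝ) (w x : V) : (f w - f x) ^ 2 ≤ effRes c {w} {x} * energy c f := by
  rcases eq_or_ne w x with rfl | hwx
  · simpa using mul_nonneg (effRes_nonneg hnn {w} {w}) (energy_nonneg hnn f)
  have hC := effCond_singleton_pos hnn hconn hwx
  have hCE : effCond c {w} {x} * (f w - f x) ^ 2 ≤ energy c f := by
    rcases le_total (f x) (f w) with h | h
    · exact effCond_mul_sq_le_energy hnn h (by simp) (by simp)
    · have := effCond_mul_sq_le_energy (A := {w}) (B := {x}) (f := -f) hnn (neg_le_neg h)
        (by simp) (by simp)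
      have hneg : energy c (-f) = energy c f := by
        rw [← neg_one_smul ℝ f, energy_smul, neg_one_sq, one_mul]
      rwa [hneg, neg_sub_neg, ← neg_sub, neg_sq] at this
  rw [effRes, div_mul_eq_mul_div, one_mul, le_div_iff₀ hC, mul_comm]
  exact hCE

end

theorem effRes_sets_lower_bound_general {V : Type*} [Fintype V]
    (c : V → V → ℝ) (hnn : ∀ a b, 0 ≤ c a b)
    (hconn : Connected c)
    (A B : Set V) (hdisj : Disjoint A B)
    (u v : V) (hu : u ∈ A) (hv : v ∈ B)
    (ε : ℝ) (hε : 0 < ε)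
    (huv : ε ≤ effRes c {u} {v})
    (hA : ∀ x ∈ A, effRes c {u} {x} ≤ ε / 12)
    (hB : ∀ x ∈ B, effRes c {v} {x} ≤ ε / 12) :
    ε / 6 ≤ effRes c A B := by
  -- `E(f) < 1.001/ε` keeps `f` within `0.29` of `1` on `A` and of `0` on `B`, since
  -- `1.001/12 < 0.29²`; the gap `0.42` then gives `C(A,B) ≤ 1.001/(0.42² ε) < 6/ε`.
  have hCuv : 0 < effCond c {u} {v} := one_div_pos.mp (hε.trans_le huv)
  have hCuv_le : effCond c {u} {v} ≤ 1 / ε := (le_one_div hε hCuv).mp huv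
  obtain ⟨f, hfu, hfv, hE⟩ := exists_energy_lt hCuv (t := 1001 / (1000 * ε))
    (hCuv_le.trans_lt (by rw [div_lt_div_iff₀ hε (by positivity)]; linarith))
  have hεE : ε * energy c f < 1001 / 1000 := by
    rw [lt_div_iff₀ (by positivity)] at hE
    linarith
  have hfA : ∀ x ∈ A, 71 / 100 ≤ f x := fun x hx => by
    have h := sq_sub_le_effRes_mul_energy hnn hconn f u x
    have hRE := mul_le_mul_of_nonneg_right (hA x hx) (energy_nonneg hnn f)
    rw [hfu u rfl] at h
    nlinarith
  have hfB : ∀ x ∈ B, f x ≤ 29 / 100 := fun x hx => by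
    have h := sq_sub_le_effRes_mul_energy hnn hconn f v x
    have hRE := mul_le_mul_of_nonneg_right (hB x hx) (energy_nonneg hnn f)
    rw [hfv v rfl] at h
    nlinarith
  have hCAB : 0 < effCond c A B :=
    hCuv.trans_le (effCond_mono hnn hdisj (by simpa) (by simpa))
  have hAB := effCond_mul_sq_le_energy hnn (by norm_num) hfA hfB
  have hεAB := mul_le_mul_of_nonneg_left hAB hε.le
  rw [effRes, le_div_iff₀ hCAB]
  nlinarith

/-- If a finite connected network is partitioned into `A` and `B`, with `u ∈ A`, `v ∈ B`,
`R_eff(u,v) ≥ ε`, `R_eff(u,x) ≤ ε/12` for all `x ∈ A`, and `R_eff(v,x) ≤ ε/12` for all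
`x ∈ B`, then `R_eff(A,B) ≥ ε/6`. -/
theorem effRes_sets_lower_bound {V : Type*} [Fintype V]
    (c : V → V → ℝ) (hsymm : ∀ a b, c a b = c b a) (hnn : ∀ a b, 0 ≤ c a b)
    (hconn : Connected c)
    (A B : Set V) (hdisj : Disjoint A B) (hcover : A ∪ B = Set.univ)
    (u v : V) (hu : u ∈ A) (hv : v ∈ B)
    (ε : ℝ) (hε : 0 < ε)
    (huv : ε ≤ effRes c {u} {v})
    (hA : ∀ x ∈ A, effRes c {u} {x} ≤ ε / 12)
    (hB : ∀ x ∈ B, effRes c {v} {x} ≤ ε / 12) :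
    ε / 6 ≤ effRes c A B :=
  effRes_sets_lower_bound_general c hnn hconn A B hdisj u v hu hv ε hε huv hA hB
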